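/- arXiv:2405.18005 — 2 statements merged into one kernel-verified Lean document; each statement's English description precedes it below -/
import Mathlib

section
/- Let K ⊂ [0,1]^d be compact with reach_μ(K) > r for some μ ∈ (0,1] and r > 0. Then for any x in the closed r-neighborhood B̄₂(K,r) of K with x ∉ K, the distance from x to the boundary ∂B̄₂(K,r) satisfies d_{∂B̄₂(K,r)}(x) ≤ (r − d_K(x))/μ ≤ r/μ. -/
open Metric Set ENNReal

noncomputable section

variable {d : ℕ}

/-- The set of closest points of `x` in `K`. -/
def closestPts (K : Set (EuclideanSpace ℝ (Fin d))) (x : EuclideanSpace ℝ (Fin d)) :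
    Set (EuclideanSpace ℝ (Fin d)) :=
  {y ∈ K | dist x y = infDist x K}

/-- Radius of the smallest closed ball centered at `c` enclosing `S`. -/
def encRadius (S : Set (EuclideanSpace ℝ (Fin d))) (c : EuclideanSpace ℝ (Fin d)) : ℝ :=
  sSup ((dist c ·) '' S)

/-- Center of the (unique) smallest enclosing ball of `S`. -/
def sebCenter (S : Set (EuclideanSpace ℝ (Fin d))) : EuclideanSpace ℝ (Fin d) :=
  Classical.epsilon fun c => ∀ c', encRadius S c ≤ encRadius S c'

/-- The generalized gradient `∇_K(x) = (x − Θ_K(x))/d_K(x)`. -/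
def genGrad (K : Set (EuclideanSpace ℝ (Fin d))) (x : EuclideanSpace ℝ (Fin d)) :
    EuclideanSpace ℝ (Fin d) :=
  (infDist x K)⁻¹ • (x - sebCenter (closestPts K x))

/-- The `μ`-reach: `inf { r | ∃ x ∉ K with d_K(x) = r and ‖∇_K(x)‖ < μ }`
(`+∞` if no such `r`). -/
def muReach (m : ℝ) (K : Set (EuclideanSpace ℝ (Fin d))) : ℝ≥0∞ :=
  sInf {r | ∃ x, x ∉ K ∧ ENNReal.ofReal (infDist x K) = r ∧ ‖genGrad K x‖ < m}

/-! ### Auxiliary lemmas -/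

section Aux

open RealInnerProductSpace

lemma dist_le_encRadius {S : Set (EuclideanSpace ℝ (Fin d))} (hS : IsCompact S)
    {c y : EuclideanSpace ℝ (Fin d)} (hy : y ∈ S) : dist c y ≤ encRadius S c :=
  le_csSup ((hS.image (continuous_const.dist continuous_id)).bddAbove) ⟨y, hy, rfl⟩

lemma encRadius_le {S : Set (EuclideanSpace ℝ (Fin d))} (hSne : S.Nonempty)
    {c : EuclideanSpace ℝ (Fin d)} {b : ℝ}
    (h : ∀ y ∈ S, dist c y ≤ b) : encRadius S c ≤ b :=
  csSup_le (hSne.image _) (by rintro _ ⟨y, hy, rfl⟩; exact h y hy)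

lemma exists_encRadius_min {S : Set (EuclideanSpace ℝ (Fin d))} (hS : IsCompact S)
    (hSne : S.Nonempty) : ∃ c, ∀ c', encRadius S c ≤ encRadius S c' := by
  obtain ⟨y₀, hy₀⟩ := hSne
  set R := encRadius S y₀ with hR
  have hR0 : 0 ≤ R := le_trans dist_nonneg (dist_le_encRadius hS hy₀)
  have hcont : Continuous fun c => encRadius S c := by
    refine (LipschitzWith.of_le_add fun a b => ?_).continuous
    refine encRadius_le ⟨y₀, hy₀⟩ fun y hy => ?_
    calc dist a y ≤ dist b y + dist a b := by rw [add_comm]; exact dist_triangle a b y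
    _ ≤ encRadius S b + dist a b := by gcongr; exact dist_le_encRadius hS hy
  obtain ⟨c₀, hc₀mem, hc₀⟩ :=
    (isCompact_closedBall y₀ R).exists_isMinOn ⟨y₀, by simp [hR0]⟩ hcont.continuousOn
  refine ⟨c₀, fun c' => ?_⟩
  by_cases hc' : c' ∈ closedBall y₀ R
  · exact hc₀ hc'
  · have h1 : R < dist c' y₀ := by
      simpa [dist_comm] using (not_le.1 (fun h => hc' (mem_closedBall.2 h)))
    calc encRadius S c₀ ≤ encRadius S y₀ := hc₀ (by simp [hR0])
    _ ≤ dist c' y₀ := h1.le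
    _ ≤ encRadius S c' := dist_le_encRadius hS hy₀

lemma sebCenter_min {S : Set (EuclideanSpace ℝ (Fin d))} (hS : IsCompact S)
    (hSne : S.Nonempty) (c' : EuclideanSpace ℝ (Fin d)) :
    encRadius S (sebCenter S) ≤ encRadius S c' :=
  Classical.epsilon_spec (exists_encRadius_min hS hSne) c'

lemma seb_key_aux {S : Set (EuclideanSpace ℝ (Fin d))} (hS : IsCompact S) (hSne : S.Nonempty)
    {x c : EuclideanSpace ℝ (Fin d)} {D : ℝ} (hdist : ∀ y ∈ S, dist x y = D)
    (hmin : ∀ c', encRadius S c ≤ encRadius S c') :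
    ‖x - c‖ ^ 2 + encRadius S c ^ 2 ≤ D ^ 2 := by
  by_contra hcon
  push_neg at hcon
  set A := ‖x - c‖ ^ 2 with hA
  set F := encRadius S c with hF
  set ε := A + F ^ 2 - D ^ 2 with hε
  have hε0 : 0 < ε := by simp only [hε]; linarith
  obtain ⟨y₁, hy₁⟩ := hSne
  have hD0 : 0 ≤ D := (hdist y₁ hy₁) ▸ dist_nonneg
  have hF0 : 0 ≤ F := le_trans dist_nonneg (dist_le_encRadius hS hy₁)
  by_cases hA0 : A = 0
  · have h0 : ‖x - c‖ ^ 2 = 0 := by rw [← hA]; exact hA0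
    have hxc : x = c := by
      have := norm_eq_zero.1 (sq_eq_zero_iff.1 h0)
      rwa [sub_eq_zero] at this
    have hFD : F ≤ D := encRadius_le ⟨y₁, hy₁⟩ fun y hy => by rw [← hxc]; exact (hdist y hy).le
    nlinarith
  · have hA0' : 0 < A := lt_of_le_of_ne (by positivity) (Ne.symm hA0)
    set t := min 1 (ε / (2 * A)) with ht
    have ht0 : 0 < t := lt_min one_pos (by positivity)
    have ht1 : t ≤ 1 := min_le_left _ _
    have htA : t * (2 * A) ≤ ε := by
      calc t * (2 * A) ≤ ε / (2 * A) * (2 * A) := by gcongr; exact min_le_right _ _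
      _ = ε := div_mul_cancel₀ _ (by positivity)
    set ct := c + t • (x - c) with hct
    have hkey : ∀ y ∈ S, dist ct y ^ 2 ≤ F ^ 2 - t * ε / 2 := by
      intro y hy
      have hyF : ‖y - c‖ ≤ F := by
        rw [show ‖y - c‖ = dist c y by rw [dist_comm, dist_eq_norm]]
        exact dist_le_encRadius hS hy
      have hyD : ‖(y - c) - (x - c)‖ = D := by
        rw [show (y - c) - (x - c) = y - x by exact sub_sub_sub_cancel_right y x c,
          ← dist_eq_norm, dist_comm]
        exact hdist y hy
      have hdct : dist ct y = ‖(y - c) - t • (x - c)‖ := by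
        rw [dist_comm, dist_eq_norm, hct, sub_add_eq_sub_sub]
      have e1 : ‖(y - c) - t • (x - c)‖ ^ 2
          = ‖y - c‖ ^ 2 - 2 * (t * ⟪y - c, x - c⟫) + t ^ 2 * ‖x - c‖ ^ 2 := by
        rw [norm_sub_sq_real, real_inner_smul_right, norm_smul, Real.norm_eq_abs, mul_pow, sq_abs]
      have e2 : ‖(y - c) - (x - c)‖ ^ 2
          = ‖y - c‖ ^ 2 - 2 * ⟪y - c, x - c⟫ + ‖x - c‖ ^ 2 := norm_sub_sq_real _ _
      rw [hyD] at e2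
      have hy2 : ‖y - c‖ ^ 2 ≤ F ^ 2 := by nlinarith [norm_nonneg (y - c)]
      rw [hdct, e1]
      have hint : t * (t * (2 * A)) ≤ t * ε := mul_le_mul_of_nonneg_left htA ht0.le
      nlinarith [mul_nonneg (by linarith : (0:ℝ) ≤ 1 - t)
        (by linarith : (0:ℝ) ≤ F ^ 2 - ‖y - c‖ ^ 2)]
    have hFle : F ≤ encRadius S ct := hmin ct
    have hE0 : 0 ≤ encRadius S ct := le_trans dist_nonneg (dist_le_encRadius hS hy₁)
    have hB0 : 0 ≤ F ^ 2 - t * ε / 2 := le_trans (sq_nonneg _) (hkey y₁ hy₁)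
    have henc : encRadius S ct ^ 2 ≤ F ^ 2 - t * ε / 2 := by
      have hle : encRadius S ct ≤ Real.sqrt (F ^ 2 - t * ε / 2) := by
        refine encRadius_le ⟨y₁, hy₁⟩ fun y hy => ?_
        have h1 := hkey y hy
        have h2 : Real.sqrt (F ^ 2 - t * ε / 2) ^ 2 = F ^ 2 - t * ε / 2 := Real.sq_sqrt hB0
        nlinarith [dist_nonneg (x := ct) (y := y), Real.sqrt_nonneg (F ^ 2 - t * ε / 2)]
      have h2 : Real.sqrt (F ^ 2 - t * ε / 2) ^ 2 = F ^ 2 - t * ε / 2 := Real.sq_sqrt hB0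
      nlinarith [Real.sqrt_nonneg (F ^ 2 - t * ε / 2)]
    nlinarith [mul_pos ht0 hε0]

lemma inner_closest_ge_aux {S : Set (EuclideanSpace ℝ (Fin d))} (hS : IsCompact S)
    (hSne : S.Nonempty) {x c : EuclideanSpace ℝ (Fin d)} {D : ℝ}
    (hdist : ∀ y ∈ S, dist x y = D)
    (hmin : ∀ c', encRadius S c ≤ encRadius S c') :
    ∀ y ∈ S, ‖x - c‖ ^ 2 ≤ ⟪x - c, x - y⟫ := by
  intro y hy
  have hkey := seb_key_aux hS hSne hdist hmin
  have hyF : ‖y - c‖ ≤ encRadius S c := by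
    rw [show ‖y - c‖ = dist c y by rw [dist_comm, dist_eq_norm]]
    exact dist_le_encRadius hS hy
  have hyD : ‖(x - c) - (x - y)‖ = ‖y - c‖ := by rw [show (x - c) - (x - y) = y - c by abel]
  have e2 : ‖(x - c) - (x - y)‖ ^ 2
      = ‖x - c‖ ^ 2 - 2 * ⟪x - c, x - y⟫ + ‖x - y‖ ^ 2 := norm_sub_sq_real _ _
  rw [hyD] at e2
  have hxyD : ‖x - y‖ = D := by rw [← dist_eq_norm]; exact hdist y hy
  rw [hxyD] at e2
  have hF0 : 0 ≤ encRadius S c := le_trans (norm_nonneg _) hyF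
  nlinarith [norm_nonneg (y - c)]

lemma le_infDist' {s : Set (EuclideanSpace ℝ (Fin d))} (hs : s.Nonempty)
    {x : EuclideanSpace ℝ (Fin d)} {b : ℝ} (h : ∀ y ∈ s, b ≤ dist x y) : b ≤ infDist x s := by
  by_contra hlt
  push_neg at hlt
  obtain ⟨y, hy, hlt'⟩ := (infDist_lt_iff hs).1 hlt
  exact absurd (h y hy) (not_le.2 hlt')

lemma directional_aux {K : Set (EuclideanSpace ℝ (Fin d))} (hK : IsCompact K)
    (hKne : K.Nonempty) {x v : EuclideanSpace ℝ (Fin d)} (hv : ‖v‖ = 1) {G : ℝ}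
    (hG : ∀ y ∈ K, dist x y = infDist x K → G ≤ ⟪v, x - y⟫) {c : ℝ} (hc0 : 0 < c)
    (hcG : infDist x K * c < G) :
    ∃ t₀ > 0, ∀ t, 0 < t → t ≤ t₀ → infDist x K + c * t ≤ infDist (x + t • v) K := by
  set D := infDist x K with hD
  have hD0 : 0 ≤ D := infDist_nonneg
  set ε := (G - D * c) / 2 with hε
  have hε0 : 0 < ε := by simp only [hε]; linarith
  obtain ⟨η, hη0, hη⟩ : ∃ η > 0, ∀ k ∈ K, dist x k ≤ D + η → G - ε ≤ ⟪v, x - k⟫ := by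
    set K' := {k ∈ K | ⟪v, x - k⟫ ≤ G - ε} with hK'
    have hK'c : IsCompact K' := by
      refine hK.of_isClosed_subset ?_ (sep_subset _ _)
      have hcontinner : Continuous fun k : EuclideanSpace ℝ (Fin d) => (⟪v, x - k⟫ : ℝ) :=
        continuous_const.inner (continuous_const.sub continuous_id)
      exact IsClosed.inter hK.isClosed (isClosed_le hcontinner continuous_const)
    rcases eq_empty_or_nonempty K' with hE | hNE
    · refine ⟨1, one_pos, fun k hk _ => ?_⟩
      by_contra hcon
      have hmem : k ∈ K' := ⟨hk, (not_le.1 hcon).le⟩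
      rw [hE] at hmem
      exact hmem
    · obtain ⟨k₀, hk₀K', hk₀d⟩ := hK'c.exists_infDist_eq_dist hNE x
      have hk₀K : k₀ ∈ K := hk₀K'.1
      have hk₀D : D < dist x k₀ := by
        rcases lt_or_eq_of_le (infDist_le_dist_of_mem hk₀K : D ≤ dist x k₀) with h | h
        · exact h
        · exfalso
          have := hG k₀ hk₀K h.symm
          have := hk₀K'.2
          linarith
      refine ⟨(dist x k₀ - D) / 2, by linarith, fun k hk hkd => ?_⟩
      by_contra hcon
      push_neg at hcon
      have hkK' : k ∈ K' := ⟨hk, hcon.le⟩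
      have : dist x k₀ ≤ dist x k := hk₀d ▸ infDist_le_dist_of_mem hkK'
      linarith
  refine ⟨min (η / (1 + c)) (2 * ε / (c ^ 2 + 1)), lt_min (by positivity) (by positivity),
    fun t ht0 ht₀ => ?_⟩
  have ht1 : t ≤ η / (1 + c) := le_trans ht₀ (min_le_left _ _)
  have ht2 : t ≤ 2 * ε / (c ^ 2 + 1) := le_trans ht₀ (min_le_right _ _)
  have ht1' : t * (1 + c) ≤ η := by
    rw [← div_mul_cancel₀ η (by positivity : (1 + c) ≠ 0)]
    gcongr
  have ht2' : t * (c ^ 2 + 1) ≤ 2 * ε := by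
    rw [← div_mul_cancel₀ (2 * ε) (by positivity : (c ^ 2 + 1) ≠ 0)]
    gcongr
  refine le_infDist' hKne fun k hk => ?_
  have hDk : D ≤ dist x k := infDist_le_dist_of_mem hk
  rcases le_or_gt (dist x k) (D + η) with hcase | hcase
  · have hinner := hη k hk hcase
    have hexp : dist (x + t • v) k ^ 2
        = ‖x - k‖ ^ 2 + 2 * (t * ⟪x - k, v⟫) + t ^ 2 := by
      rw [dist_eq_norm, show x + t • v - k = (x - k) + t • v by abel, norm_add_sq_real,
        real_inner_smul_right, norm_smul, Real.norm_eq_abs, mul_pow, sq_abs, hv]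
      ring
    have hxk : ‖x - k‖ = dist x k := (dist_eq_norm x k).symm
    have hvk : ⟪x - k, v⟫ = ⟪v, x - k⟫ := real_inner_comm _ _
    have hsq : (D + c * t) ^ 2 ≤ dist (x + t • v) k ^ 2 := by
      rw [hexp, hvk, hxk]
      have h1 : D ^ 2 ≤ dist x k ^ 2 := by nlinarith
      have h2 : G - ε ≤ ⟪v, x - k⟫ := hinner
      nlinarith
    have hpos : 0 ≤ D + c * t := by positivity
    nlinarith [dist_nonneg (x := x + t • v) (y := k)]
  · have h3 : dist x k - t ≤ dist (x + t • v) k := by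
      have htr : dist x k ≤ dist x (x + t • v) + dist (x + t • v) k := dist_triangle _ _ _
      have hdd : dist x (x + t • v) = t := by
        rw [dist_comm, dist_eq_norm, add_sub_cancel_left, norm_smul, Real.norm_eq_abs,
          abs_of_pos ht0, hv, mul_one]
      linarith
    nlinarith

lemma directional_main {K : Set (EuclideanSpace ℝ (Fin d))} (hK : IsCompact K)
    (hKne : K.Nonempty) {x : EuclideanSpace ℝ (Fin d)} (hxK : x ∉ K) {c : ℝ}
    (hc0 : 0 < c) (hcm : c < ‖genGrad K x‖) :
    ∃ v : EuclideanSpace ℝ (Fin d), ‖v‖ = 1 ∧ ∃ t₀ > 0, ∀ t, 0 < t → t ≤ t₀ →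
      infDist x K + c * t ≤ infDist (x + t • v) K := by
  set D := infDist x K with hD
  have hD0 : 0 < D := (hK.isClosed.notMem_iff_infDist_pos hKne).1 hxK
  set C := closestPts K x with hC
  have hCc : IsCompact C := by
    refine hK.of_isClosed_subset ?_ (sep_subset _ _)
    exact IsClosed.inter hK.isClosed
      (isClosed_eq (continuous_const.dist continuous_id) continuous_const)
  have hCne : C.Nonempty := by
    obtain ⟨y, hy, hdy⟩ := hK.exists_infDist_eq_dist hKne x
    exact ⟨y, hy, hdy.symm⟩
  have hdist : ∀ y ∈ C, dist x y = D := fun y hy => hy.2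
  set Θ := sebCenter C with hΘ
  have hmin := sebCenter_min hCc hCne
  set b := x - Θ with hb
  set N := ‖b‖ with hN
  have hgg : genGrad K x = D⁻¹ • b := rfl
  have hggn : ‖genGrad K x‖ = D⁻¹ * N := by
    rw [hgg, norm_smul, Real.norm_eq_abs, abs_of_pos (by positivity)]
  have hN0 : 0 < N := by
    by_contra h
    push_neg at h
    have hN0' : N = 0 := le_antisymm h (norm_nonneg b)
    rw [hggn, hN0', mul_zero] at hcm
    linarith
  refine ⟨N⁻¹ • b, ?_, ?_⟩
  · rw [norm_smul, Real.norm_eq_abs, abs_of_pos (by positivity)]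
    exact inv_mul_cancel₀ hN0.ne'
  · refine directional_aux hK hKne ?_ (G := N) ?_ hc0 ?_
    · rw [norm_smul, Real.norm_eq_abs, abs_of_pos (by positivity)]
      exact inv_mul_cancel₀ hN0.ne'
    · intro y hy hdy
      have hyC : y ∈ C := ⟨hy, hdy⟩
      have := inner_closest_ge_aux hCc hCne hdist hmin y hyC
      rw [real_inner_smul_left]
      have hNsq : N⁻¹ * N ^ 2 = N := by rw [sq, inv_mul_cancel_left₀ hN0.ne']
      calc N = N⁻¹ * N ^ 2 := hNsq.symm
      _ ≤ N⁻¹ * ⟪b, x - y⟫ := mul_le_mul_of_nonneg_left this (by positivity)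
    · have : c < D⁻¹ * N := hggn ▸ hcm
      calc D * c < D * (D⁻¹ * N) := by gcongr
      _ = N := by field_simp

end Aux

/-- Lemma 3.1 of Chazal–Cohen-Steiner–Lieutier–Thibert: if `r < reach_μ(K)`,
then for `x` in the closed `r`-neighborhood of `K` with `x ∉ K`,
`d_{∂ B̄(K,r)}(x) ≤ (r − d_K(x))/μ ≤ r/μ`. -/
theorem stmt3 (K : Set (EuclideanSpace ℝ (Fin d))) (hK : IsCompact K) (hKne : K.Nonempty)
    (m r : ℝ) (hm : m ∈ Set.Ioc (0 : ℝ) 1) (hr : 0 < r)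
    (hreach : ENNReal.ofReal r < muReach m K)
    (x : EuclideanSpace ℝ (Fin d)) (hx : infDist x K ≤ r) (hxK : x ∉ K) :
    infDist x (frontier {y | infDist y K ≤ r}) ≤ (r - infDist x K) / m ∧
    (r - infDist x K) / m ≤ r / m := by
  obtain ⟨hm0, hm1⟩ := hm
  have hD0 : 0 < infDist x K := (hK.isClosed.notMem_iff_infDist_pos hKne).1 hxK
  -- gradient lower bound in the tube
  have hgrad : ∀ y : EuclideanSpace ℝ (Fin d), y ∉ K → infDist y K ≤ r →
      m ≤ ‖genGrad K y‖ := by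
    intro y hyK hyr
    by_contra h
    push_neg at h
    have hmem : ENNReal.ofReal (infDist y K) ∈
        {s | ∃ z, z ∉ K ∧ ENNReal.ofReal (infDist z K) = s ∧ ‖genGrad K z‖ < m} :=
      ⟨y, hyK, rfl, h⟩
    have h1 : muReach m K ≤ ENNReal.ofReal (infDist y K) := sInf_le hmem
    have h2 : ENNReal.ofReal (infDist y K) ≤ ENNReal.ofReal r := ENNReal.ofReal_le_ofReal hyr
    exact absurd (h1.trans h2) (not_le.2 hreach)
  set S := {y : EuclideanSpace ℝ (Fin d) | infDist y K ≤ r} with hSdef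
  have hSclosed : IsClosed S := isClosed_le (continuous_infDist_pt K) continuous_const
  have hScompact : IsCompact S := by
    obtain ⟨k₀, hk₀⟩ := hKne
    obtain ⟨Rb, hRb⟩ := hK.isBounded.subset_closedBall k₀
    have hsub : S ⊆ closedBall k₀ (Rb + r + 1) := by
      intro y hy
      have : infDist y K < r + 1 := lt_of_le_of_lt hy (by linarith)
      obtain ⟨k, hkK, hk⟩ := (infDist_lt_iff ⟨k₀, hk₀⟩).1 this
      have hkb : dist k k₀ ≤ Rb := hRb hkK
      have := dist_triangle y k k₀
      simp only [mem_closedBall]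
      linarith
    exact (isCompact_closedBall k₀ (Rb + r + 1)).of_isClosed_subset hSclosed hsub
  have hxS : x ∈ S := hx
  -- main estimate for every lam < m
  have main : ∀ lam : ℝ, 0 < lam → lam < m →
      infDist x (frontier S) ≤ (r - infDist x K) / lam := by
    intro lam hl0 hlm
    set f : EuclideanSpace ℝ (Fin d) → ℝ := fun y => infDist y K - lam * dist x y with hf
    have hfc : ContinuousOn f S :=
      ((continuous_infDist_pt K).sub
        (continuous_const.mul (continuous_const.dist continuous_id))).continuousOn
    obtain ⟨y₀, hy₀S, hy₀max⟩ := hScompact.exists_isMaxOn ⟨x, hxS⟩ hfc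
    have hy₀max' : ∀ z ∈ S, f z ≤ f y₀ := hy₀max
    have hfx : infDist x K ≤ infDist y₀ K - lam * dist x y₀ := by
      have h := hy₀max' x hxS
      simp only [hf, dist_self, mul_zero, sub_zero] at h
      exact h
    have hy₀K : y₀ ∉ K := by
      intro hy₀K
      have h0 : infDist y₀ K = 0 := infDist_zero_of_mem hy₀K
      rw [h0] at hfx
      nlinarith [dist_nonneg (x := x) (y := y₀)]
    have hgy₀ : m ≤ ‖genGrad K y₀‖ := hgrad y₀ hy₀K hy₀S
    set c : ℝ := (lam + m) / 2 with hc
    have hc0 : 0 < c := by positivity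
    have hcm : c < ‖genGrad K y₀‖ := lt_of_lt_of_le (by simp only [hc]; linarith) hgy₀
    obtain ⟨v, hv, t₀, ht₀0, hdir⟩ := directional_main hK hKne hy₀K hc0 hcm
    have hdyt : ∀ t : ℝ, dist y₀ (y₀ + t • v) = |t| := by
      intro t
      rw [dist_comm, dist_eq_norm, add_sub_cancel_left, norm_smul, Real.norm_eq_abs, hv,
        mul_one]
    -- y₀ is at distance exactly r
    have hy₀r : infDist y₀ K = r := by
      by_contra hne
      have hlt : infDist y₀ K < r := lt_of_le_of_ne hy₀S hne
      set t := min t₀ (r - infDist y₀ K) with htdef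
      have ht0' : 0 < t := lt_min ht₀0 (by linarith)
      have htt₀ : t ≤ t₀ := min_le_left _ _
      have htr : t ≤ r - infDist y₀ K := min_le_right _ _
      have hlow := hdir t ht0' htt₀
      have hup : infDist (y₀ + t • v) K ≤ infDist y₀ K + t := by
        calc infDist (y₀ + t • v) K ≤ infDist y₀ K + dist (y₀ + t • v) y₀ :=
          infDist_le_infDist_add_dist
        _ = infDist y₀ K + t := by
            rw [dist_comm, hdyt t, abs_of_pos ht0']
      have hzS : y₀ + t • v ∈ S := by
        simp only [hSdef, mem_setOf_eq]
        linarith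
      have hcontr := hy₀max' _ hzS
      simp only [hf] at hcontr
      have hdz : dist x (y₀ + t • v) ≤ dist x y₀ + t := by
        calc dist x (y₀ + t • v) ≤ dist x y₀ + dist y₀ (y₀ + t • v) := dist_triangle _ _ _
        _ = dist x y₀ + t := by rw [hdyt t, abs_of_pos ht0']
      have : infDist y₀ K + c * t - lam * (dist x y₀ + t)
          ≤ infDist y₀ K - lam * dist x y₀ := by
        calc infDist y₀ K + c * t - lam * (dist x y₀ + t)
            ≤ infDist (y₀ + t • v) K - lam * dist x (y₀ + t • v) := by
              have : lam * dist x (y₀ + t • v) ≤ lam * (dist x y₀ + t) := by gcongr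
              linarith
        _ ≤ infDist y₀ K - lam * dist x y₀ := hcontr
      have hclam : lam < c := by simp only [hc]; linarith
      nlinarith
    -- y₀ is on the frontier
    have hy₀fr : y₀ ∈ frontier S := by
      rw [frontier_eq_closure_inter_closure]
      constructor
      · exact subset_closure hy₀S
      · rw [Metric.mem_closure_iff]
        intro ε hε
        set t := min t₀ (ε / 2) with htdef
        have ht0' : 0 < t := lt_min ht₀0 (by positivity)
        refine ⟨y₀ + t • v, ?_, ?_⟩
        · simp only [mem_compl_iff, hSdef, mem_setOf_eq, not_le]
          have := hdir t ht0' (min_le_left _ _)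
          rw [hy₀r] at this
          nlinarith
        · rw [hdyt t, abs_of_pos ht0']
          calc t ≤ ε / 2 := min_le_right _ _
          _ < ε := by linarith
    -- distance bound
    have hdb : dist x y₀ ≤ (r - infDist x K) / lam := by
      rw [hy₀r] at hfx
      rw [le_div_iff₀ hl0]
      linarith
    calc infDist x (frontier S) ≤ dist x y₀ := infDist_le_dist_of_mem hy₀fr
    _ ≤ (r - infDist x K) / lam := hdb
  constructor
  · by_contra hcon
    push_neg at hcon
    set I := infDist x (frontier S) with hI
    have hrD : 0 ≤ r - infDist x K := by linarith
    have hI0 : 0 < I := lt_of_le_of_lt (div_nonneg hrD hm0.le) hcon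
    have h1 : (r - infDist x K) / I < m := by
      rw [div_lt_iff₀ hI0]
      calc r - infDist x K < m * ((r - infDist x K) / m + (I - (r - infDist x K) / m)) := by
            have : (r - infDist x K) / m * m = r - infDist x K := div_mul_cancel₀ _ hm0.ne'
            nlinarith
      _ = m * I := by ring
    set lam := ((r - infDist x K) / I + m) / 2 with hlam
    have hl0 : 0 < lam := by
      have : 0 ≤ (r - infDist x K) / I := div_nonneg hrD hI0.le
      simp only [hlam]; linarith
    have hlm : lam < m := by simp only [hlam]; linarith
    have hbound := main lam hl0 hlm
    have hfin : (r - infDist x K) / lam < I := by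
      rw [div_lt_iff₀ hl0]
      have h2 : (r - infDist x K) / I < lam := by simp only [hlam]; linarith
      calc r - infDist x K = (r - infDist x K) / I * I := (div_mul_cancel₀ _ hI0.ne').symm
      _ < lam * I := by gcongr
      _ = I * lam := mul_comm _ _
    linarith
  · have hnum : r - infDist x K ≤ r := by linarith
    gcongr

end
end

section
/- Let X and Y be compact metrizable spaces with Y triangulable, and suppose A ⊆ X ⊆ Y where A is compact and X is an open neighborhood of A in Y. Then there exists a finite simplicial complex (subcomplex of a triangulation of Y) K with A ⊆ |K| ⊆ X; consequently the inclusion-induced map H_s(A) → H_s(X) factors through the finite-dimensional vector space H_s(|K|) and has finite rank. -/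
open CategoryTheory Cardinal

namespace Stmt17Aux

open Finset Set

/-- Maximum of a finite nonempty set totally preordered by `r`. -/
lemma exists_rel_max {α : Type*} (r : α → α → Prop) (hrefl : ∀ a, r a a)
    (htrans : ∀ {a b c}, r a b → r b c → r a c)
    (s : Finset α) (hs : s.Nonempty) (tot : ∀ v ∈ s, ∀ u ∈ s, r v u ∨ r u v) :
    ∃ m ∈ s, ∀ v ∈ s, r v m := by
  classical
  revert hs tot
  induction s using Finset.induction_on with
  | empty => exact fun hs _ => absurd hs (by simp)
  | insert a s ha ih =>
    intro hs tot
    rcases s.eq_empty_or_nonempty with rfl | hsne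
    · exact ⟨a, by simp, by simpa using hrefl a⟩
    · obtain ⟨m, hm, hmax⟩ := ih hsne (fun v hv u hu => tot v (mem_insert_of_mem hv) u (mem_insert_of_mem hu))
      rcases tot a (mem_insert_self a s) m (mem_insert_of_mem hm) with h | h
      · refine ⟨m, mem_insert_of_mem hm, ?_⟩
        intro v hv
        rcases mem_insert.1 hv with rfl | hv
        · exact h
        · exact hmax v hv
      · refine ⟨a, mem_insert_self a s, ?_⟩
        intro v hv
        rcases mem_insert.1 hv with rfl | hv
        · exact hrefl _
        · exact htrans (hmax v hv) h

variable {d : ℕ}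

/-- pointwise order on Euclidean space -/
def rle (v u : EuclideanSpace ℝ (Fin d)) : Prop := ∀ j, v j ≤ u j

lemma rle_refl (v : EuclideanSpace ℝ (Fin d)) : rle v v := fun _ => le_rfl

lemma rle_trans {a b c : EuclideanSpace ℝ (Fin d)} (h1 : rle a b) (h2 : rle b c) : rle a c :=
  fun j => (h1 j).trans (h2 j)

/-- A face of the Freudenthal triangulation of scale `δ`: a totally ordered set of
vertices of a single grid cube. -/
def IsCell (δ : ℝ) (s : Finset (EuclideanSpace ℝ (Fin d))) : Prop :=
  (∃ z : Fin d → ℤ, ∀ v ∈ s, ∀ j, v j = δ * z j ∨ v j = δ * (z j + 1)) ∧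
  (∀ v ∈ s, ∀ u ∈ s, rle v u ∨ rle u v)

lemma IsCell.subset {δ : ℝ} {s t : Finset (EuclideanSpace ℝ (Fin d))}
    (hs : IsCell δ s) (hts : t ⊆ s) : IsCell δ t :=
  ⟨hs.1.imp fun z hz => fun v hv => hz v (hts hv),
   fun v hv u hu => hs.2 v (hts hv) u (hts hu)⟩

/-- the candidate vertex of the canonical carrier of `x` at level `t` -/
noncomputable def vt (δ : ℝ) (x : EuclideanSpace ℝ (Fin d)) (t : ℝ) : EuclideanSpace ℝ (Fin d) :=
  WithLp.toLp 2 (fun j => δ * (⌊x j / δ⌋ + if t ≤ Int.fract (x j / δ) then 1 else 0))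

/-- the canonical carrier of `x`: the vertex set of the minimal simplex of the
Freudenthal triangulation containing `x` -/
def carrier (δ : ℝ) (x : EuclideanSpace ℝ (Fin d)) : Set (EuclideanSpace ℝ (Fin d)) :=
  vt δ x '' Set.Ioc (0:ℝ) 1

lemma vt_anti {δ : ℝ} (hδ : 0 < δ) (x : EuclideanSpace ℝ (Fin d)) {t t' : ℝ} (h : t ≤ t') :
    rle (vt δ x t') (vt δ x t) := by
  intro j
  show δ * _ ≤ δ * _
  have : (if t' ≤ Int.fract (x j / δ) then (1:ℝ) else 0) ≤ (if t ≤ Int.fract (x j / δ) then (1:ℝ) else 0) := by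
    split_ifs with h1 h2 h2 <;> [norm_num; exact absurd (h.trans h1) h2; norm_num; norm_num]
  exact mul_le_mul_of_nonneg_left (by linarith) hδ.le

/-- any finite subset of a carrier is a cell -/
lemma isCell_of_subset_carrier {δ : ℝ} (hδ : 0 < δ) (x : EuclideanSpace ℝ (Fin d))
    {s : Finset (EuclideanSpace ℝ (Fin d))} (hs : ↑s ⊆ carrier δ x) : IsCell δ s := by
  constructor
  · refine ⟨fun j => ⌊x j / δ⌋, fun v hv j => ?_⟩
    obtain ⟨t, _, rfl⟩ := hs hv
    show δ * _ = δ * _ ∨ δ * _ = δ * _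
    split_ifs with h
    · right; push_cast; ring_nf
    · left; push_cast; ring_nf
  · intro v hv u hu
    obtain ⟨t, _, rfl⟩ := hs hv
    obtain ⟨t', _, rfl⟩ := hs hu
    rcases le_total t t' with h | h
    · exact Or.inr (vt_anti hδ x h)
    · exact Or.inl (vt_anti hδ x h)

lemma vt_coord_cases {δ : ℝ} (hδ : 0 < δ) (x : EuclideanSpace ℝ (Fin d)) (t : ℝ) (j : Fin d) :
    vt δ x t j = δ * ⌊x j / δ⌋ ∨ vt δ x t j = δ * ⌊x j / δ⌋ + δ := by
  show δ * _ = _ ∨ δ * _ = _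
  split_ifs <;> [right; left] <;> ring

/-- carrier vertices are within `δ` of `x` in each coordinate -/
lemma vt_coord_close {δ : ℝ} (hδ : 0 < δ) (x : EuclideanSpace ℝ (Fin d)) (t : ℝ) (j : Fin d) :
    |vt δ x t j - x j| ≤ δ := by
  have h1 : δ * ⌊x j / δ⌋ ≤ x j := by
    rw [mul_comm]
    exact (le_div_iff₀ hδ).1 (Int.floor_le _)
  have h2 : x j < δ * ⌊x j / δ⌋ + δ := by
    have := Int.lt_floor_add_one (x j / δ)
    calc x j = δ * (x j / δ) := by field_simp
    _ < δ * (⌊x j / δ⌋ + 1) := by nlinarith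
    _ = δ * ⌊x j / δ⌋ + δ := by ring
  rcases vt_coord_cases hδ x t j with h | h <;> rw [h, abs_le] <;> constructor <;> linarith

lemma coord_sum (s : Finset (EuclideanSpace ℝ (Fin d))) (f : EuclideanSpace ℝ (Fin d) → ℝ)
    (j : Fin d) : (∑ v ∈ s, f v • v) j = ∑ v ∈ s, f v * v j := by
  classical
  induction s using Finset.induction_on with
  | empty => simp
  | insert a s ha ih =>
    rw [Finset.sum_insert ha, Finset.sum_insert ha, ← ih]
    rfl

lemma carrier_eq {δ : ℝ} (hδ : 0 < δ) {s : Finset (EuclideanSpace ℝ (Fin d))}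
    (hcell : IsCell δ s) (hne : s.Nonempty)
    {w : EuclideanSpace ℝ (Fin d) → ℝ} (hwpos : ∀ v ∈ s, 0 < w v)
    (hwsum : ∑ v ∈ s, w v = 1)
    {x : EuclideanSpace ℝ (Fin d)} (hx : ∑ v ∈ s, w v • v = x) :
    ↑s = carrier δ x := by
  classical
  obtain ⟨⟨z, hz⟩, tot⟩ := hcell
  obtain ⟨m0, hm0s, hm0min⟩ := exists_rel_max (fun a b => rle b a) rle_refl
    (fun h1 h2 => rle_trans h2 h1) s hne (fun v hv u hu => (tot v hv u hu).symm)
  -- Step A : all coordinates are m0 j or m0 j + δ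
  have hA : ∀ v ∈ s, ∀ j, v j = m0 j ∨ v j = m0 j + δ := by
    intro v hv j
    rcases hz v hv j with h1 | h1 <;> rcases hz m0 hm0s j with h2 | h2
    · left; rw [h1, h2]
    · exfalso
      have h3 := hm0min v hv j
      rw [h1, h2] at h3
      nlinarith
    · right; rw [h1, h2]; ring
    · left; rw [h1, h2]
  -- integer coordinates of m0
  have hζ : ∀ j, m0 j = δ * (if m0 j = δ * z j then (z j : ℝ) else (z j : ℝ) + 1) := by
    intro j
    by_cases h : m0 j = δ * z j
    · rw [if_pos h]; exact h
    · rw [if_neg h]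
      rcases hz m0 hm0s j with h2 | h2
      · exact absurd h2 h
      · rw [h2]
  set ζ : Fin d → ℤ := fun j => if m0 j = δ * z j then z j else z j + 1 with hζdef
  have hζ' : ∀ j, m0 j = δ * (ζ j : ℝ) := by
    intro j
    rw [hζdef]
    simp only
    rw [apply_ite (fun n : ℤ => (n : ℝ))]
    push_cast
    exact hζ j
  set F : Fin d → Finset (EuclideanSpace ℝ (Fin d)) :=
    fun j => s.filter (fun v => v j = m0 j + δ) with hF
  set T : Fin d → ℝ := fun j => ∑ v ∈ F j, w v with hT
  have hFs : ∀ j, F j ⊆ s := fun j => Finset.filter_subset _ _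
  have hTnn : ∀ j, 0 ≤ T j := fun j =>
    Finset.sum_nonneg fun v hv => (hwpos v (hFs j hv)).le
  have hFerase : ∀ j, F j ⊆ s.erase m0 := by
    intro j u hu
    obtain ⟨hus, huj⟩ := Finset.mem_filter.1 hu
    refine Finset.mem_erase.2 ⟨?_, hus⟩
    intro e
    rw [e] at huj
    linarith
  have hTlt : ∀ j, T j < 1 := by
    intro j
    have h1 : T j ≤ ∑ v ∈ s.erase m0, w v :=
      Finset.sum_le_sum_of_subset_of_nonneg (hFerase j)
        (fun v hv _ => (hwpos v (Finset.mem_of_mem_erase hv)).le)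
    have h2 : ∑ v ∈ s.erase m0, w v + w m0 = 1 := by
      rw [Finset.sum_erase_add _ _ hm0s]; exact hwsum
    have := hwpos m0 hm0s
    linarith
  -- coordinates of x
  have hxj : ∀ j, x j = m0 j + δ * T j := by
    intro j
    have h1 : x j = ∑ v ∈ s, w v * v j := by rw [← hx, coord_sum]
    have h2 : ∀ v ∈ s, w v * v j = w v * m0 j + (if v j = m0 j + δ then w v * δ else 0) := by
      intro v hv
      rcases hA v hv j with h | h
      · rw [h, if_neg (by intro e; linarith)]
        ring
      · rw [h, if_pos rfl]; ring
    rw [h1, Finset.sum_congr rfl h2, Finset.sum_add_distrib, ← Finset.sum_mul, hwsum, one_mul,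
      ← Finset.sum_filter]
    rw [hT]
    simp only [hF]
    rw [← Finset.sum_mul]
    ring
  have hdiv : ∀ j, x j / δ = (ζ j : ℝ) + T j := by
    intro j
    rw [hxj j, hζ' j]
    field_simp
  have hfloor : ∀ j, ⌊x j / δ⌋ = ζ j := by
    intro j
    rw [hdiv j]
    rw [Int.floor_intCast_add, Int.floor_eq_zero_iff.2 ⟨hTnn j, hTlt j⟩, add_zero]
  have hfract : ∀ j, Int.fract (x j / δ) = T j := by
    intro j
    rw [hdiv j, Int.fract_intCast_add, Int.fract_eq_self.2 ⟨hTnn j, hTlt j⟩]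
  -- the level of each vertex
  set tv : EuclideanSpace ℝ (Fin d) → ℝ :=
    fun v => ∑ u ∈ s.filter (fun u => rle v u), w u with htvdef
  have htv_pos : ∀ v ∈ s, 0 < tv v := by
    intro v hv
    have hvm : v ∈ s.filter (fun u => rle v u) := Finset.mem_filter.2 ⟨hv, rle_refl v⟩
    have h1 : w v ≤ tv v :=
      Finset.single_le_sum (fun u hu => (hwpos u (Finset.mem_filter.1 hu).1).le) hvm
    linarith [hwpos v hv]
  have htv_le : ∀ v ∈ s, tv v ≤ 1 := by
    intro v hv
    have h1 : tv v ≤ ∑ u ∈ s, w u :=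
      Finset.sum_le_sum_of_subset_of_nonneg (Finset.filter_subset _ _)
        (fun u hu _ => (hwpos u hu).le)
    rw [hwsum] at h1
    exact h1
  have htv_anti : ∀ v ∈ s, ∀ u ∈ s, rle v u → tv u ≤ tv v := by
    intro v hv u hu hvu
    apply Finset.sum_le_sum_of_subset_of_nonneg
    · intro a ha
      obtain ⟨has, hua⟩ := Finset.mem_filter.1 ha
      exact Finset.mem_filter.2 ⟨has, rle_trans hvu hua⟩
    · intro a ha _
      exact (hwpos a (Finset.mem_filter.1 ha).1).le
  -- Step U1 : every vertex is a canonical carrier vertex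
  have hU1 : ∀ v ∈ s, v = vt δ x (tv v) := by
    intro v hv
    ext j
    show v j = δ * (⌊x j / δ⌋ + if tv v ≤ Int.fract (x j / δ) then 1 else 0)
    rw [hfloor j, hfract j]
    rcases hA v hv j with h | h
    · -- low coordinate : the indicator must vanish
      have hsub : F j ⊆ (s.filter (fun u => rle v u)).erase v := by
        intro u hu
        obtain ⟨hus, huj⟩ := Finset.mem_filter.1 hu
        have hne' : u ≠ v := by
          intro e
          rw [e, h] at huj
          linarith
        have hrvu : rle v u := by
          rcases tot v hv u hus with hh | hh
          · exact hh
          · exfalso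
            have := hh j
            rw [huj, h] at this
            linarith
        exact Finset.mem_erase.2 ⟨hne', Finset.mem_filter.2 ⟨hus, hrvu⟩⟩
      have hvm : v ∈ s.filter (fun u => rle v u) := Finset.mem_filter.2 ⟨hv, rle_refl v⟩
      have h2 : ∑ u ∈ (s.filter (fun u => rle v u)).erase v, w u + w v = tv v :=
        Finset.sum_erase_add _ _ hvm
      have h1 : T j ≤ ∑ u ∈ (s.filter (fun u => rle v u)).erase v, w u :=
        Finset.sum_le_sum_of_subset_of_nonneg hsub
          (fun u hu _ => (hwpos u (Finset.mem_filter.1 (Finset.mem_of_mem_erase hu)).1).le)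
      have h3 : ¬ tv v ≤ T j := by
        have := hwpos v hv
        linarith
      rw [if_neg h3, h, hζ' j]
      ring
    · -- high coordinate : the indicator is 1
      have hsub : s.filter (fun u => rle v u) ⊆ F j := by
        intro u hu
        obtain ⟨hus, hrvu⟩ := Finset.mem_filter.1 hu
        rcases hA u hus j with hh | hh
        · exfalso
          have := hrvu j
          rw [h, hh] at this
          linarith
        · exact Finset.mem_filter.2 ⟨hus, hh⟩
      have h1 : tv v ≤ T j :=
        Finset.sum_le_sum_of_subset_of_nonneg hsub
          (fun u hu _ => (hwpos u (hFs j hu)).le)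
      rw [if_pos h1, h, hζ' j]
      ring
  -- conclusion
  apply Set.Subset.antisymm
  · intro v hv
    have hv' : v ∈ s := hv
    exact ⟨tv v, ⟨htv_pos v hv', htv_le v hv'⟩, (hU1 v hv').symm⟩
  · rintro y ⟨t, ⟨ht0, ht1⟩, rfl⟩
    set M : Finset (EuclideanSpace ℝ (Fin d)) := s.filter (fun v => t ≤ tv v) with hM
    have htvm0 : tv m0 = 1 := by
      have : s.filter (fun u => rle m0 u) = s := Finset.filter_true_of_mem hm0min
      simp only [htvdef]
      rw [this, hwsum]
    have hm0M : m0 ∈ M := Finset.mem_filter.2 ⟨hm0s, by rw [htvm0]; exact ht1⟩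
    obtain ⟨m, hmM, hmmax⟩ := exists_rel_max rle rle_refl rle_trans M ⟨m0, hm0M⟩
      (fun v hv u hu => tot v (Finset.mem_filter.1 hv).1 u (Finset.mem_filter.1 hu).1)
    have hms : m ∈ s := (Finset.mem_filter.1 hmM).1
    have htm : t ≤ tv m := (Finset.mem_filter.1 hmM).2
    have key : vt δ x t = vt δ x (tv m) := by
      ext j
      show δ * (⌊x j / δ⌋ + if t ≤ Int.fract (x j / δ) then 1 else 0)
        = δ * (⌊x j / δ⌋ + if tv m ≤ Int.fract (x j / δ) then 1 else 0)
      rw [hfract j]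
      have hiff : (t ≤ T j) = (tv m ≤ T j) := by
        apply propext
        constructor
        · intro h
          have hFne : (F j).Nonempty := by
            by_contra hc
            rw [Finset.not_nonempty_iff_eq_empty] at hc
            have : T j = 0 := by
              simp only [hT]
              rw [hc, Finset.sum_empty]
            linarith
          obtain ⟨mj, hmjF, hmjmin⟩ := exists_rel_max (fun a b => rle b a) rle_refl
            (fun h1 h2 => rle_trans h2 h1) (F j) hFne
            (fun v hv u hu => ((tot v (hFs j hv) u (hFs j hu)).symm : _))
          have hmjs : mj ∈ s := hFs j hmjF
          have hmjj : mj j = m0 j + δ := (Finset.mem_filter.1 hmjF).2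
          have heq : s.filter (fun u => rle mj u) = F j := by
            apply Finset.Subset.antisymm
            · intro u hu
              obtain ⟨hus, hrel⟩ := Finset.mem_filter.1 hu
              rcases hA u hus j with hh | hh
              · exfalso
                have := hrel j
                rw [hmjj, hh] at this
                linarith
              · exact Finset.mem_filter.2 ⟨hus, hh⟩
            · intro u hu
              exact Finset.mem_filter.2 ⟨hFs j hu, hmjmin u hu⟩
          have htvmj : tv mj = T j := by
            simp only [htvdef, hT]
            rw [heq]
          have hmjM : mj ∈ M := Finset.mem_filter.2 ⟨hmjs, by rw [htvmj]; exact h⟩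
          have h4 : tv m ≤ tv mj := htv_anti mj hmjs m hms (hmmax mj hmjM)
          linarith
        · intro h
          exact htm.trans h
      simp only [hiff]
    rw [key, ← hU1 m hms]
    exact hms



lemma alg1 {c δ B xj fj : ℝ} (h : xj = δ * (B + fj)) (hc : 1 - c ≠ 0) :
    (1 - c)⁻¹ * (xj - c * (δ * (B + 1))) = δ * (B + (fj - c) / (1 - c)) := by
  subst h
  field_simp
  ring

lemma alg2 {c δ B xj : ℝ} (h : xj = δ * (B + 0)) (hc : 1 - c ≠ 0) :
    (1 - c)⁻¹ * (xj - c * (δ * (B + 0))) = δ * (B + 0) := by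
  subst h
  field_simp

lemma floor_div_eq {δ : ℝ} (hδ : 0 < δ) {r : ℝ} {z : ℤ} {T : ℝ}
    (h : r = δ * (z + T)) (h0 : 0 ≤ T) (h1 : T < 1) :
    ⌊r / δ⌋ = z ∧ Int.fract (r / δ) = T := by
  have hdiv : r / δ = (z : ℝ) + T := by rw [h]; field_simp
  constructor
  · rw [hdiv, Int.floor_intCast_add, Int.floor_eq_zero_iff.2 ⟨h0, h1⟩, add_zero]
  · rw [hdiv, Int.fract_intCast_add, Int.fract_eq_self.2 ⟨h0, h1⟩]

/-- Every point lies in the convex hull of (a nonempty finite subset of) its carrier. -/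
lemma exists_good_subset {δ : ℝ} (hδ : 0 < δ) (x : EuclideanSpace ℝ (Fin d)) :
    ∃ s : Finset (EuclideanSpace ℝ (Fin d)),
      s.Nonempty ∧ ↑s ⊆ carrier δ x ∧ x ∈ convexHull ℝ (s : Set (EuclideanSpace ℝ (Fin d))) := by
  classical
  set Nval : EuclideanSpace ℝ (Fin d) → ℕ := fun y =>
    (((Finset.univ : Finset (Fin d)).image (fun j => Int.fract (y j / δ))).filter
      (fun a => 0 < a)).card with hNval
  suffices H : ∀ n (y : EuclideanSpace ℝ (Fin d)), Nval y = n →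
      ∃ s : Finset (EuclideanSpace ℝ (Fin d)),
        s.Nonempty ∧ ↑s ⊆ carrier δ y ∧ y ∈ convexHull ℝ (s : Set (EuclideanSpace ℝ (Fin d))) by
    exact H (Nval x) x rfl
  intro n
  induction n using Nat.strong_induction_on with
  | _ n ih =>
    intro x hn
    by_cases hall : ∀ j, Int.fract (x j / δ) = 0
    · -- x is a lattice point
      have hx1 : x = vt δ x 1 := by
        ext j
        show x j = δ * (⌊x j / δ⌋ + if (1:ℝ) ≤ Int.fract (x j / δ) then 1 else 0)
        rw [hall j, if_neg (by norm_num)]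
        have : (⌊x j / δ⌋ : ℝ) = x j / δ := by
          have := Int.floor_add_fract (x j / δ)
          rw [hall j, add_zero] at this
          exact this
        rw [add_zero, this]
        field_simp
      refine ⟨{x}, Finset.singleton_nonempty x, ?_, ?_⟩
      · intro v hv
        rw [Finset.coe_singleton, Set.mem_singleton_iff] at hv
        subst hv
        exact ⟨1, ⟨one_pos, le_refl 1⟩, hx1.symm⟩
      · exact subset_convexHull ℝ _ (by simp)
    · push_neg at hall
      obtain ⟨j0, hj0⟩ := hall
      set f : Fin d → ℝ := fun j => Int.fract (x j / δ) with hf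
      set P : Finset ℝ := ((Finset.univ : Finset (Fin d)).image f).filter (fun a => 0 < a)
        with hP
      have hPne : P.Nonempty := by
        refine ⟨f j0, Finset.mem_filter.2 ⟨Finset.mem_image.2 ⟨j0, Finset.mem_univ _, rfl⟩, ?_⟩⟩
        exact lt_of_le_of_ne (Int.fract_nonneg _) (Ne.symm hj0)
      set c : ℝ := P.min' hPne with hc
      have hcP : c ∈ P := P.min'_mem hPne
      have hc0 : 0 < c := (Finset.mem_filter.1 hcP).2
      have hc1 : c < 1 := by
        obtain ⟨j1, _, hj1⟩ := Finset.mem_image.1 (Finset.mem_filter.1 hcP).1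
        rw [← hj1]
        exact Int.fract_lt_one _
      have hcmin : ∀ j, 0 < f j → c ≤ f j := by
        intro j hfj
        exact P.min'_le _ (Finset.mem_filter.2 ⟨Finset.mem_image.2 ⟨j, Finset.mem_univ _, rfl⟩, hfj⟩)
      have hfnn : ∀ j, 0 ≤ f j := fun j => Int.fract_nonneg _
      have hflt : ∀ j, f j < 1 := fun j => Int.fract_lt_one _
      have hcf : ∀ j, (c ≤ f j ↔ 0 < f j) := by
        intro j
        constructor
        · intro h; linarith
        · exact hcmin j
      have h1c : (0:ℝ) < 1 - c := by linarith
      set vstar : EuclideanSpace ℝ (Fin d) := vt δ x c with hvstar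
      set y : EuclideanSpace ℝ (Fin d) := (1 - c)⁻¹ • (x - c • vstar) with hy
      have hxj : ∀ j, x j = δ * (⌊x j / δ⌋ + f j) := by
        intro j
        have := Int.floor_add_fract (x j / δ)
        rw [hf]
        simp only
        rw [this]
        field_simp
      set g : Fin d → ℝ := fun j => if 0 < f j then (f j - c) / (1 - c) else 0 with hg
      have hgnn : ∀ j, 0 ≤ g j := by
        intro j
        rw [hg]
        simp only
        split_ifs with h
        · have := hcmin j h
          apply div_nonneg <;> linarith
        · exact le_rfl
      have hglt : ∀ j, g j < 1 := by
        intro j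
        rw [hg]
        simp only
        split_ifs with h
        · rw [div_lt_one h1c]
          linarith [hflt j]
        · linarith
      have hyj : ∀ j, y j = δ * (⌊x j / δ⌋ + g j) := by
        intro j
        have hyjval : y j = (1 - c)⁻¹ * (x j - c * vstar j) := rfl
        have hvsj : vstar j = δ * (⌊x j / δ⌋ + if 0 < f j then 1 else 0) := by
          show δ * (⌊x j / δ⌋ + if c ≤ Int.fract (x j / δ) then 1 else 0) = _
          congr 1
          congr 1
          rw [if_congr (hcf j) rfl rfl]
        rw [hyjval, hvsj, hg]
        simp only
        split_ifs with h
        · exact alg1 (hxj j) (ne_of_gt h1c)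
        · have hfj : f j = 0 := le_antisymm (not_lt.1 h) (hfnn j)
          have hx0 : x j = δ * ((⌊x j / δ⌋ : ℝ) + 0) := by
            have := hxj j
            rw [hfj] at this
            exact this
          exact alg2 hx0 (ne_of_gt h1c)
      have hyfl : ∀ j, ⌊y j / δ⌋ = ⌊x j / δ⌋ ∧ Int.fract (y j / δ) = g j :=
        fun j => floor_div_eq hδ (hyj j) (hgnn j) (hglt j)
      -- carrier of y is inside carrier of x
      have hvt_trans : ∀ t, 0 < t → t ≤ 1 → vt δ y t = vt δ x (c + t * (1 - c)) := by
        intro t ht0 ht1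
        ext j
        show δ * (⌊y j / δ⌋ + if t ≤ Int.fract (y j / δ) then 1 else 0)
          = δ * (⌊x j / δ⌋ + if c + t * (1 - c) ≤ Int.fract (x j / δ) then 1 else 0)
        rw [(hyfl j).1, (hyfl j).2]
        congr 2
        apply if_congr _ rfl rfl
        rw [hg]
        simp only
        split_ifs with h
        · rw [le_div_iff₀ h1c]
          constructor <;> intro <;> linarith
        · have hfj' : Int.fract (x j / δ) = 0 := le_antisymm (not_lt.1 h) (hfnn j)
          constructor
          · intro h2; linarith
          · intro h2
            rw [hfj'] at h2
            nlinarith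
      have hsubc : carrier δ y ⊆ carrier δ x := by
        rintro v ⟨t, ⟨ht0, ht1⟩, rfl⟩
        refine ⟨c + t * (1 - c), ⟨by nlinarith, by nlinarith⟩, (hvt_trans t ht0 ht1).symm⟩
      -- the measure decreases
      have hNy : Nval y < n := by
        rw [← hn]
        have hsub2 : ((Finset.univ : Finset (Fin d)).image (fun j => Int.fract (y j / δ))).filter
            (fun a => 0 < a) ⊆ (P.erase c).image (fun a => (a - c) / (1 - c)) := by
          intro b hb
          obtain ⟨hbim, hbpos⟩ := Finset.mem_filter.1 hb
          obtain ⟨j, _, hj⟩ := Finset.mem_image.1 hbim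
          rw [(hyfl j).2] at hj
          have hfj : 0 < f j := by
            by_contra hcon
            rw [hg] at hj
            simp only at hj
            rw [if_neg hcon] at hj
            rw [← hj] at hbpos
            exact lt_irrefl 0 hbpos
          have hgj : g j = (f j - c) / (1 - c) := by rw [hg]; simp only; rw [if_pos hfj]
          have hfjc : f j ≠ c := by
            intro e
            rw [hgj, e] at hj
            simp at hj
            rw [← hj] at hbpos
            exact lt_irrefl 0 hbpos
          refine Finset.mem_image.2 ⟨f j, ?_, by rw [← hj, hgj]⟩
          exact Finset.mem_erase.2 ⟨hfjc,
            Finset.mem_filter.2 ⟨Finset.mem_image.2 ⟨j, Finset.mem_univ _, rfl⟩, hfj⟩⟩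
        calc Nval y ≤ ((P.erase c).image (fun a => (a - c) / (1 - c))).card :=
              Finset.card_le_card hsub2
          _ ≤ (P.erase c).card := Finset.card_image_le
          _ < P.card := Finset.card_erase_lt_of_mem hcP
      obtain ⟨s', hs'ne, hs'sub, hs'mem⟩ := ih (Nval y) hNy y rfl
      refine ⟨insert vstar s', Finset.insert_nonempty _ _, ?_, ?_⟩
      · rw [Finset.coe_insert]
        rintro v (rfl | hv)
        · exact ⟨c, ⟨hc0, hc1.le⟩, rfl⟩
        · exact hsubc (hs'sub hv)
      · have hx_eq : x = c • vstar + (1 - c) • y := by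
          rw [hy, smul_inv_smul₀ (ne_of_gt h1c)]
          abel
        have hv1 : vstar ∈ convexHull ℝ (↑(insert vstar s') : Set (EuclideanSpace ℝ (Fin d))) :=
          subset_convexHull ℝ _ (by simp)
        have hv2 : y ∈ convexHull ℝ (↑(insert vstar s') : Set (EuclideanSpace ℝ (Fin d))) :=
          convexHull_mono (by rw [Finset.coe_insert]; exact Set.subset_insert _ _) hs'mem
        rw [hx_eq]
        exact (convex_convexHull ℝ _) hv1 hv2 hc0.le (by linarith) (by ring)

lemma coord_sum' {ι : Type*} (u : Finset ι) (c : ι → ℝ) (p : ι → EuclideanSpace ℝ (Fin d))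
    (j : Fin d) : (∑ i ∈ u, c i • p i) j = ∑ i ∈ u, c i * p i j := by
  classical
  induction u using Finset.induction_on with
  | empty => simp
  | insert a s ha ih =>
    rw [Finset.sum_insert ha, Finset.sum_insert ha, ← ih]
    rfl

lemma cell_affineIndependent {δ : ℝ} (hδ : 0 < δ) {s : Finset (EuclideanSpace ℝ (Fin d))}
    (hcell : IsCell δ s) : AffineIndependent ℝ ((↑) : ↥s → EuclideanSpace ℝ (Fin d)) := by
  classical
  obtain ⟨⟨z, hz⟩, tot⟩ := hcell
  rw [affineIndependent_iff]
  suffices H : ∀ n (u : Finset ↥s) (c : ↥s → ℝ), u.card ≤ n → u.sum c = 0 →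
      (∑ i ∈ u, c i • (i : EuclideanSpace ℝ (Fin d))) = 0 → ∀ i ∈ u, c i = 0 by
    intro u c h1 h2
    exact H u.card u c le_rfl h1 h2
  intro n
  induction n with
  | zero =>
    intro u c hcard _ _ i hi
    rw [Nat.le_zero, Finset.card_eq_zero] at hcard
    subst hcard
    exact absurd hi (Finset.notMem_empty i)
  | succ n ih =>
    intro u c hcard hsum hvec i hi
    have hune : u.Nonempty := ⟨i, hi⟩
    obtain ⟨mx, hmx, hmxmax⟩ := exists_rel_max (fun a b : ↥s => rle (a : EuclideanSpace ℝ (Fin d)) b)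
      (fun a => rle_refl _) (fun h1 h2 => rle_trans h1 h2) u hune
      (fun v _ u' _ => tot ↑v v.2 ↑u' u'.2)
    by_cases hall : ∀ i' ∈ u, i' = mx
    · have hu1 : u = {mx} := Finset.eq_singleton_iff_unique_mem.2 ⟨hmx, hall⟩
      rw [hu1, Finset.sum_singleton] at hsum
      rw [hall i hi]
      exact hsum
    · push_neg at hall
      obtain ⟨i0, hi0u, hi0ne⟩ := hall
      have herasene : (u.erase mx).Nonempty := ⟨i0, Finset.mem_erase.2 ⟨hi0ne, hi0u⟩⟩
      obtain ⟨mx2, hmx2, hmx2max⟩ := exists_rel_max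
        (fun a b : ↥s => rle (a : EuclideanSpace ℝ (Fin d)) b)
        (fun a => rle_refl _) (fun h1 h2 => rle_trans h1 h2) (u.erase mx) herasene
        (fun v _ u' _ => tot ↑v v.2 ↑u' u'.2)
      have hmx2u : mx2 ∈ u := Finset.mem_of_mem_erase hmx2
      have hmx2ne : mx2 ≠ mx := (Finset.mem_erase.1 hmx2).1
      have hle : rle (mx2 : EuclideanSpace ℝ (Fin d)) ↑mx := hmxmax mx2 hmx2u
      have hne2 : (mx2 : EuclideanSpace ℝ (Fin d)) ≠ ↑mx :=
        fun e => hmx2ne (Subtype.coe_injective e)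
      have hexj : ∃ j, (mx2 : EuclideanSpace ℝ (Fin d)) j < (mx : EuclideanSpace ℝ (Fin d)) j := by
        by_contra hcon
        push_neg at hcon
        apply hne2
        ext j
        exact le_antisymm (hle j) (hcon j)
      obtain ⟨j, hj⟩ := hexj
      have hmxj : (mx : EuclideanSpace ℝ (Fin d)) j = δ * z j + δ := by
        rcases hz ↑mx mx.2 j with h1 | h1 <;> rcases hz ↑mx2 mx2.2 j with h2 | h2
        · rw [h1, h2] at hj; exact absurd hj (lt_irrefl _)
        · rw [h1, h2] at hj; nlinarith
        · rw [h1]; ring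
        · rw [h1, h2] at hj; exact absurd hj (lt_irrefl _)
      have hothers : ∀ i' ∈ u, i' ≠ mx → (i' : EuclideanSpace ℝ (Fin d)) j = δ * z j := by
        intro i' hi'u hi'ne
        have h3 : (i' : EuclideanSpace ℝ (Fin d)) j ≤ (mx2 : EuclideanSpace ℝ (Fin d)) j :=
          hmx2max i' (Finset.mem_erase.2 ⟨hi'ne, hi'u⟩) j
        rcases hz ↑i' i'.2 j with h1 | h1
        · exact h1
        · exfalso
          rw [h1] at h3
          rw [hmxj] at hj
          nlinarith
      have heval : ∀ i' ∈ u, c i' * (i' : EuclideanSpace ℝ (Fin d)) j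
          = c i' * (δ * z j) + (if i' = mx then c i' * δ else 0) := by
        intro i' hi'u
        by_cases he : i' = mx
        · subst he; rw [if_pos rfl, hmxj]; ring
        · rw [if_neg he, hothers i' hi'u he]; ring
      have h0 : (0:ℝ) = ∑ i' ∈ u, c i' * (i' : EuclideanSpace ℝ (Fin d)) j :=
        calc (0:ℝ) = (0 : EuclideanSpace ℝ (Fin d)) j := rfl
          _ = (∑ i' ∈ u, c i' • (i' : EuclideanSpace ℝ (Fin d))) j := by rw [hvec]
          _ = _ := coord_sum' u c _ j
      have hcmx : c mx = 0 := by
        rw [Finset.sum_congr rfl heval, Finset.sum_add_distrib, ← Finset.sum_mul, hsum, zero_mul,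
          zero_add, Finset.sum_ite_eq' u mx (fun i' => c i' * δ), if_pos hmx] at h0
        rcases mul_eq_zero.1 h0.symm with h | h
        · exact h
        · exact absurd h (ne_of_gt hδ)
      by_cases he : i = mx
      · rw [he]; exact hcmx
      · refine ih (u.erase mx) c ?_ ?_ ?_ i (Finset.mem_erase.2 ⟨he, hi⟩)
        · rw [Finset.card_erase_of_mem hmx]
          omega
        · have h5 := Finset.sum_erase_add u c hmx
          rw [hsum] at h5
          rw [hcmx] at h5
          linarith [h5]
        · have h5 := Finset.sum_erase_add u (fun i' => c i' • (i' : EuclideanSpace ℝ (Fin d))) hmx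
          simp only [hcmx, zero_smul, add_zero] at h5
          exact h5.trans hvec

lemma dist_le_of_coord {c : ℝ} (hc : 0 ≤ c) (v x : EuclideanSpace ℝ (Fin d))
    (h : ∀ j, |v j - x j| ≤ c) : dist v x ≤ c * Real.sqrt d := by
  rw [EuclideanSpace.dist_eq]
  have h1 : ∑ j : Fin d, dist (v j) (x j) ^ 2 ≤ (d : ℝ) * c ^ 2 := by
    calc ∑ j : Fin d, dist (v j) (x j) ^ 2 ≤ ∑ _j : Fin d, c ^ 2 := by
          apply Finset.sum_le_sum
          intro j _
          have h2 : dist (v j) (x j) ≤ c := by rw [Real.dist_eq]; exact h j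
          exact pow_le_pow_left₀ dist_nonneg h2 2
      _ = (d : ℝ) * c ^ 2 := by
          rw [Finset.sum_const, Finset.card_univ, Fintype.card_fin, nsmul_eq_mul]
  calc Real.sqrt (∑ j : Fin d, dist (v j) (x j) ^ 2) ≤ Real.sqrt ((d : ℝ) * c ^ 2) :=
        Real.sqrt_le_sqrt h1
    _ = c * Real.sqrt d := by
        rw [Real.sqrt_mul (by positivity), Real.sqrt_sq hc]
        ring

lemma coord_le_norm (x : EuclideanSpace ℝ (Fin d)) (j : Fin d) : |x j| ≤ ‖x‖ := by
  have h1 : (x j) ^ 2 ≤ ∑ i : Fin d, ‖x i‖ ^ 2 := by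
    have h2 : (x j) ^ 2 = ‖x j‖ ^ 2 := by rw [Real.norm_eq_abs, sq_abs]
    rw [h2]
    exact Finset.single_le_sum (fun i _ => sq_nonneg ‖x i‖) (Finset.mem_univ j)
  calc |x j| = Real.sqrt ((x j) ^ 2) := (Real.sqrt_sq_eq_abs _).symm
    _ ≤ Real.sqrt (∑ i : Fin d, ‖x i‖ ^ 2) := Real.sqrt_le_sqrt h1
    _ = ‖x‖ := (EuclideanSpace.norm_eq x).symm

lemma exists_complex {δ : ℝ} (ε2 : ℝ) (hδ : 0 < δ) (A : Set (EuclideanSpace ℝ (Fin d))) :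
    ∃ K : Geometry.SimplicialComplex ℝ (EuclideanSpace ℝ (Fin d)),
      K.faces = {u | IsCell δ u ∧ u.Nonempty ∧ ∃ a ∈ A, ∀ v ∈ u, dist v a ≤ ε2} := by
  classical
  refine ⟨⟨⟨{u | IsCell δ u ∧ u.Nonempty ∧ ∃ a ∈ A, ∀ v ∈ u, dist v a ≤ ε2}, ?_⟩, ?_, ?_⟩, rfl⟩
  · rintro s ⟨hcell, hsne, a, ha, hd⟩
    refine ⟨hsne, fun t hts htne => ?_⟩
    exact ⟨hcell.subset hts, htne, a, ha,
      fun v hv => hd v (hts hv)⟩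
  · rintro s ⟨hcell, _, _⟩
    exact cell_affineIndependent hδ hcell
  · rintro s t ⟨hcells, _, _⟩ ⟨hcellt, _, _⟩ x ⟨hxs, hxt⟩
    -- positive-support representations on both sides
    obtain ⟨w1, hw10, hw11, hw1c⟩ := Finset.mem_convexHull.1 hxs
    obtain ⟨w2, hw20, hw21, hw2c⟩ := Finset.mem_convexHull.1 hxt
    have main : ∀ (u : Finset (EuclideanSpace ℝ (Fin d))) (w : EuclideanSpace ℝ (Fin d) → ℝ),
        IsCell δ u → (∀ y ∈ u, 0 ≤ w y) → ∑ y ∈ u, w y = 1 → u.centerMass w id = x →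
        ∃ u' : Finset (EuclideanSpace ℝ (Fin d)), u' ⊆ u ∧
          (↑u' = carrier δ x) ∧ (∀ y ∈ u', 0 < w y) ∧ (∑ y ∈ u', w y = 1) ∧
          ∑ v ∈ u', w v • v = x := by
      intro u w hcell hw0 hw1 hwc
      set u' := u.filter (fun v => 0 < w v) with hu'
      have hu's : u' ⊆ u := Finset.filter_subset _ _
      have hzero : ∀ v ∈ u.filter (fun v => ¬ 0 < w v), w v = 0 :=
        fun v hv => le_antisymm (not_lt.1 (Finset.mem_filter.1 hv).2) (hw0 v (Finset.mem_filter.1 hv).1)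
      have hadd := Finset.sum_filter_add_sum_filter_not u (fun v => 0 < w v) w
      have hz0 : ∑ v ∈ u.filter (fun v => ¬ 0 < w v), w v = 0 := Finset.sum_eq_zero hzero
      have hsum' : ∑ v ∈ u', w v = 1 := by
        rw [hz0] at hadd
        rw [← hw1, ← hadd, add_zero]
      have hvec : ∑ v ∈ u, w v • v = x := by
        have h4 := (Finset.centerMass_eq_of_sum_1 u id hw1).symm.trans hwc
        simpa using h4
      have hvec' : ∑ v ∈ u', w v • v = x := by
        have hadd2 := Finset.sum_filter_add_sum_filter_not u (fun v => 0 < w v) (fun v => w v • v)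
        have hz2 : ∑ v ∈ u.filter (fun v => ¬ 0 < w v), w v • v = 0 :=
          Finset.sum_eq_zero (fun v hv => by rw [hzero v hv, zero_smul])
        rw [hz2, add_zero] at hadd2
        rw [hadd2, hvec]
      have hu'ne : u'.Nonempty := by
        rw [Finset.nonempty_iff_ne_empty]
        intro he
        rw [he, Finset.sum_empty] at hsum'
        norm_num at hsum'
      exact ⟨u', hu's, carrier_eq hδ (hcell.subset hu's) hu'ne
        (fun v hv => (Finset.mem_filter.1 hv).2) hsum' hvec',
        fun v hv => (Finset.mem_filter.1 hv).2, hsum', hvec'⟩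
    obtain ⟨s', hs's, hs'car, hs'pos, hs'sum, hs'vec⟩ := main s w1 hcells hw10 hw11 hw1c
    obtain ⟨t', ht't, ht'car, _, _, _⟩ := main t w2 hcellt hw20 hw21 hw2c
    have hsub2 : (↑s' : Set (EuclideanSpace ℝ (Fin d))) ⊆ (↑s ∩ ↑t : Set (EuclideanSpace ℝ (Fin d))) := by
      intro v hv
      refine ⟨hs's hv, ?_⟩
      have : v ∈ (↑t' : Set (EuclideanSpace ℝ (Fin d))) := by
        rw [ht'car, ← hs'car]
        exact hv
      exact ht't this
    have hcm : s'.centerMass w1 id = x := by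
      rw [Finset.centerMass_eq_of_sum_1 _ id hs'sum]
      simpa using hs'vec
    rw [← hcm]
    exact Finset.centerMass_mem_convexHull s' (fun v hv => (hs'pos v hv).le)
      (by rw [hs'sum]; norm_num) (fun v hv => hsub2 hv)


lemma faces_finite {δ ε2 : ℝ} (hδ : 0 < δ) {A : Set (EuclideanSpace ℝ (Fin d))}
    (hA : IsCompact A) :
    {u : Finset (EuclideanSpace ℝ (Fin d)) |
      IsCell δ u ∧ u.Nonempty ∧ ∃ a ∈ A, ∀ v ∈ u, dist v a ≤ ε2}.Finite := by
  classical
  obtain ⟨R, hR⟩ := hA.isBounded.subset_closedBall 0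
  set M : ℤ := ⌈(R + ε2) / δ⌉ with hM
  set S : Set (EuclideanSpace ℝ (Fin d)) :=
    (fun (m : Fin d → ℤ) => (WithLp.toLp 2 (fun j => δ * m j) : EuclideanSpace ℝ (Fin d))) ''
      (Set.Icc (fun _ => -M) (fun _ => M)) with hS
  have hSfin : S.Finite := (Set.finite_Icc _ _).image _
  have hsub : ∀ u ∈ {u : Finset (EuclideanSpace ℝ (Fin d)) |
      IsCell δ u ∧ u.Nonempty ∧ ∃ a ∈ A, ∀ v ∈ u, dist v a ≤ ε2},
      (↑u : Set (EuclideanSpace ℝ (Fin d))) ⊆ S := by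
    rintro u ⟨⟨⟨z, hz⟩, _⟩, _, a, ha, hd⟩ v hv
    have hvu : v ∈ u := hv
    set m : Fin d → ℤ := fun j => if v j = δ * z j then z j else z j + 1 with hm
    have hmv : ∀ j, v j = δ * m j := by
      intro j
      rw [hm]
      simp only
      split_ifs with h
      · exact h
      · rcases hz v hvu j with h1 | h1
        · exact absurd h1 h
        · rw [h1]; push_cast; ring
    have hnorm : ‖v‖ ≤ R + ε2 := by
      have h1 : dist v a ≤ ε2 := hd v hvu
      have h2 : dist a 0 ≤ R := hR ha
      calc ‖v‖ = dist v 0 := (dist_zero_right v).symm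
        _ ≤ dist v a + dist a 0 := dist_triangle v a 0
        _ ≤ ε2 + R := add_le_add h1 h2
        _ = R + ε2 := by ring
    have hmb : ∀ j, -M ≤ m j ∧ m j ≤ M := by
      intro j
      have h1 : |δ * (m j : ℝ)| ≤ R + ε2 := by
        rw [← hmv j]
        exact (coord_le_norm v j).trans hnorm
      rw [abs_mul, abs_of_pos hδ] at h1
      have h2 : |(m j : ℝ)| ≤ (R + ε2) / δ := by
        rw [le_div_iff₀ hδ]
        linarith [h1]
      have h3 : |(m j : ℝ)| ≤ (M : ℝ) := h2.trans (Int.le_ceil _)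
      rw [abs_le] at h3
      constructor
      · exact_mod_cast h3.1
      · exact_mod_cast h3.2
    refine ⟨m, Set.mem_Icc.2 ⟨fun j => (hmb j).1, fun j => (hmb j).2⟩, ?_⟩
    ext j
    exact (hmv j).symm
  apply Set.Finite.subset (hSfin.toFinset.powerset : Finset _).finite_toSet
  intro u hu
  rw [Finset.mem_coe, Finset.mem_powerset]
  intro v hv
  rw [Set.Finite.mem_toFinset]
  exact hsub u hu hv

end Stmt17Aux

/-- The inclusion, as a morphism in `TopCat`, induced by `A ⊆ B`. -/
def inclM {T : Type} [TopologicalSpace T] {A B : Set T} (h : A ⊆ B) :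
    TopCat.of ↥A ⟶ TopCat.of ↥B :=
  TopCat.ofHom ⟨Set.inclusion h, continuous_inclusion h⟩

open Stmt17Aux

/-- If `A` is compact and `X` an open neighborhood of `A` in `ℝ^d`, there is a
finite simplicial complex `K` with `A ⊆ |K| ⊆ X`; consequently, for any
homology-like functor `Hfun` assigning finite-dimensional spaces to finite
simplicial complexes, the inclusion-induced map `H_s(A) → H_s(X)` factors
through `H_s(|K|)` and has finite rank. -/
theorem stmt17 {k : Type} [Field k] {d : ℕ}
    (Hfun : TopCat.{0} ⥤ ModuleCat.{0} k)
    (hfin : ∀ K : Geometry.SimplicialComplex ℝ (EuclideanSpace ℝ (Fin d)),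
      K.faces.Finite → FiniteDimensional k (Hfun.obj (TopCat.of ↥K.space)))
    (A X : Set (EuclideanSpace ℝ (Fin d))) (hA : IsCompact A) (hX : IsOpen X)
    (hAX : A ⊆ X) :
    (∃ K : Geometry.SimplicialComplex ℝ (EuclideanSpace ℝ (Fin d)),
      K.faces.Finite ∧ A ⊆ K.space ∧ K.space ⊆ X ∧
      ∃ (j₁ : TopCat.of ↥A ⟶ TopCat.of ↥K.space) (j₂ : TopCat.of ↥K.space ⟶ TopCat.of ↥X),
        inclM hAX = j₁ ≫ j₂ ∧ Hfun.map (inclM hAX) = Hfun.map j₁ ≫ Hfun.map j₂) ∧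
    LinearMap.rank (Hfun.map (inclM hAX)).hom < ℵ₀ := by
  classical
  obtain ⟨ε, hε, hthick⟩ := hA.exists_thickening_subset_open hX hAX
  have hsd : (0:ℝ) ≤ Real.sqrt d := Real.sqrt_nonneg d
  have hden : (0:ℝ) < 2 * (Real.sqrt d + 1) := by positivity
  set δ : ℝ := ε / (2 * (Real.sqrt d + 1)) with hδdef
  have hδ : 0 < δ := div_pos hε hden
  have hδd : δ * Real.sqrt d ≤ ε / 2 := by
    rw [hδdef, div_mul_eq_mul_div, div_le_div_iff₀ hden (by norm_num)]
    nlinarith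
  obtain ⟨K, hKfaces⟩ := exists_complex (δ := δ) (ε / 2) hδ A
  have hKfin : K.faces.Finite := by
    rw [hKfaces]
    exact faces_finite hδ hA
  have hAK : A ⊆ K.space := by
    intro x hxA
    obtain ⟨s, hsne, hssub, hxhull⟩ := exists_good_subset hδ x
    have hsface : s ∈ K.faces := by
      rw [hKfaces]
      refine ⟨isCell_of_subset_carrier hδ x hssub, hsne, x, hxA, ?_⟩
      intro v hv
      obtain ⟨t, _, rfl⟩ := hssub hv
      calc dist (vt δ x t) x ≤ δ * Real.sqrt d :=
            dist_le_of_coord hδ.le _ _ (vt_coord_close hδ x t)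
        _ ≤ ε / 2 := hδd
    exact Set.mem_biUnion hsface hxhull
  have hKX : K.space ⊆ X := by
    apply Set.iUnion₂_subset
    intro u hu
    rw [hKfaces] at hu
    obtain ⟨_, _, a, ha, hd⟩ := hu
    have h1 : convexHull ℝ (↑u : Set (EuclideanSpace ℝ (Fin d))) ⊆ Metric.closedBall a (ε/2) :=
      convexHull_min (fun v hv => Metric.mem_closedBall.2 (hd v hv)) (convex_closedBall a (ε/2))
    refine h1.trans (fun y hy => hthick ?_)
    exact Metric.mem_thickening_iff.2
      ⟨a, ha, lt_of_le_of_lt (Metric.mem_closedBall.1 hy) (by linarith)⟩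
  have h1 : inclM hAX = inclM hAK ≫ inclM hKX := rfl
  refine ⟨⟨K, hKfin, hAK, hKX, inclM hAK, inclM hKX, h1, by rw [h1, Functor.map_comp]⟩, ?_⟩
  haveI hfd : FiniteDimensional k (Hfun.obj (TopCat.of ↥K.space)) := hfin K hKfin
  have h2 : (Hfun.map (inclM hAX)).hom = (Hfun.map (inclM hKX)).hom ∘ₗ (Hfun.map (inclM hAK)).hom := by
    rw [h1, Functor.map_comp, ModuleCat.hom_comp]
  rw [h2]
  calc LinearMap.rank ((Hfun.map (inclM hKX)).hom ∘ₗ (Hfun.map (inclM hAK)).hom)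
      ≤ LinearMap.rank (Hfun.map (inclM hKX)).hom := LinearMap.rank_comp_le_left _ _
    _ ≤ Module.rank k (Hfun.obj (TopCat.of ↥K.space)) := LinearMap.rank_le_domain _
    _ < ℵ₀ := Module.rank_lt_aleph0 k _
end
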